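/- arXiv:1210.2073 — 4 statements merged into one kernel-verified Lean document; each statement's English description precedes it below -/
import Mathlib

section
/- The group with presentation ⟨x_1, x_2, x_3 | x_1^2 = x_2^2 = x_3^2 = (x_1 x_2)^2 = (x_2 x_3)^3 = (x_1 x_3)^3 = (x_1 x_2 x_3)^4 = (x_1 x_2 x_3 x_2)^3 = 1⟩ is isomorphic to S_4. -/
/-- The relations of the presentation
`⟨x₁,x₂,x₃ | xᵢ² = (x₁x₂)² = (x₂x₃)³ = (x₁x₃)³ = (x₁x₂x₃)⁴ = (x₁x₂x₃x₂)³ = 1⟩`. -/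
def s4Rels : Set (FreeGroup (Fin 3)) :=
  { (FreeGroup.of 0) ^ 2, (FreeGroup.of 1) ^ 2, (FreeGroup.of 2) ^ 2,
    (FreeGroup.of 0 * FreeGroup.of 1) ^ 2,
    (FreeGroup.of 1 * FreeGroup.of 2) ^ 3,
    (FreeGroup.of 0 * FreeGroup.of 2) ^ 3,
    (FreeGroup.of 0 * FreeGroup.of 1 * FreeGroup.of 2) ^ 4,
    (FreeGroup.of 0 * FreeGroup.of 1 * FreeGroup.of 2 * FreeGroup.of 1) ^ 3 }

namespace S4Aux

abbrev P := PresentedGroup s4Rels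

def a : P := PresentedGroup.of 0
def b : P := PresentedGroup.of 1
def c : P := PresentedGroup.of 2

lemma rel_one {r : FreeGroup (Fin 3)} (h : r ∈ s4Rels) :
    PresentedGroup.mk s4Rels r = 1 :=
  (QuotientGroup.eq_one_iff _).mpr (Subgroup.subset_normalClosure h)

lemma ha : a * a = 1 := by
  have := rel_one (show (FreeGroup.of 0)^2 ∈ s4Rels by simp [s4Rels])
  rwa [pow_two, map_mul] at this

lemma hb : b * b = 1 := by
  have := rel_one (show (FreeGroup.of 1)^2 ∈ s4Rels by simp [s4Rels])
  rwa [pow_two, map_mul] at this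

lemma hc : c * c = 1 := by
  have := rel_one (show (FreeGroup.of 2)^2 ∈ s4Rels by simp [s4Rels])
  rwa [pow_two, map_mul] at this

lemma hab2 : (a * b)^2 = 1 := by
  have := rel_one (show (FreeGroup.of 0 * FreeGroup.of 1)^2 ∈ s4Rels by simp [s4Rels])
  rwa [map_pow, map_mul] at this

lemma hbc3 : (b * c)^3 = 1 := by
  have := rel_one (show (FreeGroup.of 1 * FreeGroup.of 2)^3 ∈ s4Rels by simp [s4Rels])
  rwa [map_pow, map_mul] at this

lemma hac3 : (a * c)^3 = 1 := by
  have := rel_one (show (FreeGroup.of 0 * FreeGroup.of 2)^3 ∈ s4Rels by simp [s4Rels])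
  rwa [map_pow, map_mul] at this

section gen
variable {G : Type*} [Group G] {x y : G}

lemma braid (hx : x * x = 1) (hy : y * y = 1) (h : (x * y)^3 = 1) :
    x * (y * x) = y * (x * y) := by
  have hxi : x⁻¹ = x := inv_eq_of_mul_eq_one_right hx
  have hyi : y⁻¹ = y := inv_eq_of_mul_eq_one_right hy
  have h' : (x * y) * ((x * y) * (x * y)) = 1 := by
    simpa [pow_succ, pow_two, mul_assoc] using h
  have e : y * x = x * (y * (x * y)) := by
    calc y * x = y⁻¹ * x⁻¹ := by rw [hxi, hyi]
    _ = (x * y)⁻¹ := (mul_inv_rev x y).symm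
    _ = (x * y) * (x * y) := inv_eq_of_mul_eq_one_right h'
    _ = x * (y * (x * y)) := by rw [mul_assoc]
  calc x * (y * x) = x * (x * (y * (x * y))) := by rw [e]
  _ = (x * x) * (y * (x * y)) := by rw [mul_assoc]
  _ = y * (x * y) := by rw [hx, one_mul]

lemma comm2 (hx : x * x = 1) (hy : y * y = 1) (h : (x * y)^2 = 1) :
    y * x = x * y := by
  have hxi : x⁻¹ = x := inv_eq_of_mul_eq_one_right hx
  have hyi : y⁻¹ = y := inv_eq_of_mul_eq_one_right hy
  have h' : (x * y) * (x * y) = 1 := by simpa [pow_two] using h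
  calc y * x = y⁻¹ * x⁻¹ := by rw [hxi, hyi]
  _ = (x * y)⁻¹ := (mul_inv_rev x y).symm
  _ = x * y := inv_eq_of_mul_eq_one_left h'

end gen

lemma hba : b * a = a * b := comm2 ha hb hab2
lemma hbcb : b * (c * b) = c * (b * c) := braid hb hc hbc3
lemma hcac : c * (a * c) = a * (c * a) := (braid ha hc hac3).symm

lemma ha' : ∀ p : P, a * (a * p) = p := fun p => by rw [← mul_assoc, ha, one_mul]
lemma hb' : ∀ p : P, b * (b * p) = p := fun p => by rw [← mul_assoc, hb, one_mul]
lemma hc' : ∀ p : P, c * (c * p) = p := fun p => by rw [← mul_assoc, hc, one_mul]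
lemma hba' : ∀ p : P, b * (a * p) = a * (b * p) := fun p => by
  rw [← mul_assoc, hba, mul_assoc]
lemma hbcb' : ∀ p : P, b * (c * (b * p)) = c * (b * (c * p)) := fun p => by
  rw [← mul_assoc, ← mul_assoc, mul_assoc b c b, hbcb, ← mul_assoc, mul_assoc, mul_assoc]
lemma hcac' : ∀ p : P, c * (a * (c * p)) = a * (c * (a * p)) := fun p => by
  rw [← mul_assoc, ← mul_assoc, mul_assoc c a c, hcac, ← mul_assoc, mul_assoc, mul_assoc]
lemma hbcab : b * (c * (a * b)) = c * (b * (c * a)) := by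
  rw [← hba, hbcb']
lemma hbcab' : ∀ p : P, b * (c * (a * (b * p))) = c * (b * (c * (a * p))) := fun p => by
  rw [← hba' p, hbcb']

def v : Fin 24 → P :=
  ![1, a, b, c, a * (b), a * (c), b * (c), c * (a), c * (b), a * (b * (c)), a * (c * (a)), a * (c * (b)), b * (c * (a)), c * (a * (b)), c * (b * (c)), a * (b * (c * (a))), a * (c * (a * (b))), a * (c * (b * (c))), c * (a * (b * (c))), c * (b * (c * (a))), a * (c * (a * (b * (c)))), a * (c * (b * (c * (a)))), c * (a * (b * (c * (a)))), a * (c * (a * (b * (c * (a)))))]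

def u : Fin 24 → Equiv.Perm (Fin 4) :=
  ![1, Equiv.swap 1 2, Equiv.swap 0 3, Equiv.swap 0 1, Equiv.swap 1 2 * (Equiv.swap 0 3), Equiv.swap 1 2 * (Equiv.swap 0 1), Equiv.swap 0 3 * (Equiv.swap 0 1), Equiv.swap 0 1 * (Equiv.swap 1 2), Equiv.swap 0 1 * (Equiv.swap 0 3), Equiv.swap 1 2 * (Equiv.swap 0 3 * (Equiv.swap 0 1)), Equiv.swap 1 2 * (Equiv.swap 0 1 * (Equiv.swap 1 2)), Equiv.swap 1 2 * (Equiv.swap 0 1 * (Equiv.swap 0 3)), Equiv.swap 0 3 * (Equiv.swap 0 1 * (Equiv.swap 1 2)), Equiv.swap 0 1 * (Equiv.swap 1 2 * (Equiv.swap 0 3)), Equiv.swap 0 1 * (Equiv.swap 0 3 * (Equiv.swap 0 1)), Equiv.swap 1 2 * (Equiv.swap 0 3 * (Equiv.swap 0 1 * (Equiv.swap 1 2))), Equiv.swap 1 2 * (Equiv.swap 0 1 * (Equiv.swap 1 2 * (Equiv.swap 0 3))), Equiv.swap 1 2 * (Equiv.swap 0 1 * (Equiv.swap 0 3 * (Equiv.swap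 0 1))), Equiv.swap 0 1 * (Equiv.swap 1 2 * (Equiv.swap 0 3 * (Equiv.swap 0 1))), Equiv.swap 0 1 * (Equiv.swap 0 3 * (Equiv.swap 0 1 * (Equiv.swap 1 2))), Equiv.swap 1 2 * (Equiv.swap 0 1 * (Equiv.swap 1 2 * (Equiv.swap 0 3 * (Equiv.swap 0 1)))), Equiv.swap 1 2 * (Equiv.swap 0 1 * (Equiv.swap 0 3 * (Equiv.swap 0 1 * (Equiv.swap 1 2)))), Equiv.swap 0 1 * (Equiv.swap 1 2 * (Equiv.swap 0 3 * (Equiv.swap 0 1 * (Equiv.swap 1 2)))), Equiv.swap 1 2 * (Equiv.swap 0 1 * (Equiv.swap 1 2 * (Equiv.swap 0 3 * (Equiv.swap 0 1 * (Equiv.swap 1 2)))))]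

lemma step_a : ∀ p ∈ Set.range v, a * p ∈ Set.range v := by
  rintro p ⟨n, rfl⟩
  fin_cases n
  · refine ⟨1, ?_⟩
    show a = a * 1
    simp only [ha, hb, hc, ha', hb', hc', hba, hba', hbcb, hbcb', hcac, hcac', hbcab, hbcab', one_mul, mul_one]
  · refine ⟨0, ?_⟩
    show 1 = a * (a)
    simp only [ha, hb, hc, ha', hb', hc', hba, hba', hbcb, hbcb', hcac, hcac', hbcab, hbcab', one_mul, mul_one]
  · refine ⟨4, ?_⟩
    show a * (b) = a * (b)
    rfl
  · refine ⟨5, ?_⟩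
    show a * (c) = a * (c)
    rfl
  · refine ⟨2, ?_⟩
    show b = a * (a * (b))
    simp only [ha, hb, hc, ha', hb', hc', hba, hba', hbcb, hbcb', hcac, hcac', hbcab, hbcab', one_mul, mul_one]
  · refine ⟨3, ?_⟩
    show c = a * (a * (c))
    simp only [ha, hb, hc, ha', hb', hc', hba, hba', hbcb, hbcb', hcac, hcac', hbcab, hbcab', one_mul, mul_one]
  · refine ⟨9, ?_⟩
    show a * (b * (c)) = a * (b * (c))
    rfl
  · refine ⟨10, ?_⟩
    show a * (c * (a)) = a * (c * (a))
    rfl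
  · refine ⟨11, ?_⟩
    show a * (c * (b)) = a * (c * (b))
    rfl
  · refine ⟨6, ?_⟩
    show b * (c) = a * (a * (b * (c)))
    simp only [ha, hb, hc, ha', hb', hc', hba, hba', hbcb, hbcb', hcac, hcac', hbcab, hbcab', one_mul, mul_one]
  · refine ⟨7, ?_⟩
    show c * (a) = a * (a * (c * (a)))
    simp only [ha, hb, hc, ha', hb', hc', hba, hba', hbcb, hbcb', hcac, hcac', hbcab, hbcab', one_mul, mul_one]
  · refine ⟨8, ?_⟩
    show c * (b) = a * (a * (c * (b)))
    simp only [ha, hb, hc, ha', hb', hc', hba, hba', hbcb, hbcb', hcac, hcac', hbcab, hbcab', one_mul, mul_one]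
  · refine ⟨15, ?_⟩
    show a * (b * (c * (a))) = a * (b * (c * (a)))
    rfl
  · refine ⟨16, ?_⟩
    show a * (c * (a * (b))) = a * (c * (a * (b)))
    rfl
  · refine ⟨17, ?_⟩
    show a * (c * (b * (c))) = a * (c * (b * (c)))
    rfl
  · refine ⟨12, ?_⟩
    show b * (c * (a)) = a * (a * (b * (c * (a))))
    simp only [ha, hb, hc, ha', hb', hc', hba, hba', hbcb, hbcb', hcac, hcac', hbcab, hbcab', one_mul, mul_one]
  · refine ⟨13, ?_⟩
    show c * (a * (b)) = a * (a * (c * (a * (b))))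
    simp only [ha, hb, hc, ha', hb', hc', hba, hba', hbcb, hbcb', hcac, hcac', hbcab, hbcab', one_mul, mul_one]
  · refine ⟨14, ?_⟩
    show c * (b * (c)) = a * (a * (c * (b * (c))))
    simp only [ha, hb, hc, ha', hb', hc', hba, hba', hbcb, hbcb', hcac, hcac', hbcab, hbcab', one_mul, mul_one]
  · refine ⟨20, ?_⟩
    show a * (c * (a * (b * (c)))) = a * (c * (a * (b * (c))))
    rfl
  · refine ⟨21, ?_⟩
    show a * (c * (b * (c * (a)))) = a * (c * (b * (c * (a))))
    rfl
  · refine ⟨18, ?_⟩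
    show c * (a * (b * (c))) = a * (a * (c * (a * (b * (c)))))
    simp only [ha, hb, hc, ha', hb', hc', hba, hba', hbcb, hbcb', hcac, hcac', hbcab, hbcab', one_mul, mul_one]
  · refine ⟨19, ?_⟩
    show c * (b * (c * (a))) = a * (a * (c * (b * (c * (a)))))
    simp only [ha, hb, hc, ha', hb', hc', hba, hba', hbcb, hbcb', hcac, hcac', hbcab, hbcab', one_mul, mul_one]
  · refine ⟨23, ?_⟩
    show a * (c * (a * (b * (c * (a))))) = a * (c * (a * (b * (c * (a)))))
    rfl
  · refine ⟨22, ?_⟩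
    show c * (a * (b * (c * (a)))) = a * (a * (c * (a * (b * (c * (a))))))
    simp only [ha, hb, hc, ha', hb', hc', hba, hba', hbcb, hbcb', hcac, hcac', hbcab, hbcab', one_mul, mul_one]

lemma step_b : ∀ p ∈ Set.range v, b * p ∈ Set.range v := by
  rintro p ⟨n, rfl⟩
  fin_cases n
  · refine ⟨2, ?_⟩
    show b = b * 1
    simp only [ha, hb, hc, ha', hb', hc', hba, hba', hbcb, hbcb', hcac, hcac', hbcab, hbcab', one_mul, mul_one]
  · refine ⟨4, ?_⟩
    show a * (b) = b * (a)
    simp only [ha, hb, hc, ha', hb', hc', hba, hba', hbcb, hbcb', hcac, hcac', hbcab, hbcab', one_mul, mul_one]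
  · refine ⟨0, ?_⟩
    show 1 = b * (b)
    simp only [ha, hb, hc, ha', hb', hc', hba, hba', hbcb, hbcb', hcac, hcac', hbcab, hbcab', one_mul, mul_one]
  · refine ⟨6, ?_⟩
    show b * (c) = b * (c)
    rfl
  · refine ⟨1, ?_⟩
    show a = b * (a * (b))
    simp only [ha, hb, hc, ha', hb', hc', hba, hba', hbcb, hbcb', hcac, hcac', hbcab, hbcab', one_mul, mul_one]
  · refine ⟨9, ?_⟩
    show a * (b * (c)) = b * (a * (c))
    simp only [ha, hb, hc, ha', hb', hc', hba, hba', hbcb, hbcb', hcac, hcac', hbcab, hbcab', one_mul, mul_one]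
  · refine ⟨3, ?_⟩
    show c = b * (b * (c))
    simp only [ha, hb, hc, ha', hb', hc', hba, hba', hbcb, hbcb', hcac, hcac', hbcab, hbcab', one_mul, mul_one]
  · refine ⟨12, ?_⟩
    show b * (c * (a)) = b * (c * (a))
    rfl
  · refine ⟨14, ?_⟩
    show c * (b * (c)) = b * (c * (b))
    simp only [ha, hb, hc, ha', hb', hc', hba, hba', hbcb, hbcb', hcac, hcac', hbcab, hbcab', one_mul, mul_one]
  · refine ⟨5, ?_⟩
    show a * (c) = b * (a * (b * (c)))
    simp only [ha, hb, hc, ha', hb', hc', hba, hba', hbcb, hbcb', hcac, hcac', hbcab, hbcab', one_mul, mul_one]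
  · refine ⟨15, ?_⟩
    show a * (b * (c * (a))) = b * (a * (c * (a)))
    simp only [ha, hb, hc, ha', hb', hc', hba, hba', hbcb, hbcb', hcac, hcac', hbcab, hbcab', one_mul, mul_one]
  · refine ⟨17, ?_⟩
    show a * (c * (b * (c))) = b * (a * (c * (b)))
    simp only [ha, hb, hc, ha', hb', hc', hba, hba', hbcb, hbcb', hcac, hcac', hbcab, hbcab', one_mul, mul_one]
  · refine ⟨7, ?_⟩
    show c * (a) = b * (b * (c * (a)))
    simp only [ha, hb, hc, ha', hb', hc', hba, hba', hbcb, hbcb', hcac, hcac', hbcab, hbcab', one_mul, mul_one]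
  · refine ⟨19, ?_⟩
    show c * (b * (c * (a))) = b * (c * (a * (b)))
    simp only [ha, hb, hc, ha', hb', hc', hba, hba', hbcb, hbcb', hcac, hcac', hbcab, hbcab', one_mul, mul_one]
  · refine ⟨8, ?_⟩
    show c * (b) = b * (c * (b * (c)))
    simp only [ha, hb, hc, ha', hb', hc', hba, hba', hbcb, hbcb', hcac, hcac', hbcab, hbcab', one_mul, mul_one]
  · refine ⟨10, ?_⟩
    show a * (c * (a)) = b * (a * (b * (c * (a))))
    simp only [ha, hb, hc, ha', hb', hc', hba, hba', hbcb, hbcb', hcac, hcac', hbcab, hbcab', one_mul, mul_one]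
  · refine ⟨21, ?_⟩
    show a * (c * (b * (c * (a)))) = b * (a * (c * (a * (b))))
    simp only [ha, hb, hc, ha', hb', hc', hba, hba', hbcb, hbcb', hcac, hcac', hbcab, hbcab', one_mul, mul_one]
  · refine ⟨11, ?_⟩
    show a * (c * (b)) = b * (a * (c * (b * (c))))
    simp only [ha, hb, hc, ha', hb', hc', hba, hba', hbcb, hbcb', hcac, hcac', hbcab, hbcab', one_mul, mul_one]
  · refine ⟨22, ?_⟩
    show c * (a * (b * (c * (a)))) = b * (c * (a * (b * (c))))
    simp only [ha, hb, hc, ha', hb', hc', hba, hba', hbcb, hbcb', hcac, hcac', hbcab, hbcab', one_mul, mul_one]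
  · refine ⟨13, ?_⟩
    show c * (a * (b)) = b * (c * (b * (c * (a))))
    simp only [ha, hb, hc, ha', hb', hc', hba, hba', hbcb, hbcb', hcac, hcac', hbcab, hbcab', one_mul, mul_one]
  · refine ⟨23, ?_⟩
    show a * (c * (a * (b * (c * (a))))) = b * (a * (c * (a * (b * (c)))))
    simp only [ha, hb, hc, ha', hb', hc', hba, hba', hbcb, hbcb', hcac, hcac', hbcab, hbcab', one_mul, mul_one]
  · refine ⟨16, ?_⟩
    show a * (c * (a * (b))) = b * (a * (c * (b * (c * (a)))))
    simp only [ha, hb, hc, ha', hb', hc', hba, hba', hbcb, hbcb', hcac, hcac', hbcab, hbcab', one_mul, mul_one]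
  · refine ⟨18, ?_⟩
    show c * (a * (b * (c))) = b * (c * (a * (b * (c * (a)))))
    simp only [ha, hb, hc, ha', hb', hc', hba, hba', hbcb, hbcb', hcac, hcac', hbcab, hbcab', one_mul, mul_one]
  · refine ⟨20, ?_⟩
    show a * (c * (a * (b * (c)))) = b * (a * (c * (a * (b * (c * (a))))))
    simp only [ha, hb, hc, ha', hb', hc', hba, hba', hbcb, hbcb', hcac, hcac', hbcab, hbcab', one_mul, mul_one]

lemma step_c : ∀ p ∈ Set.range v, c * p ∈ Set.range v := by
  rintro p ⟨n, rfl⟩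
  fin_cases n
  · refine ⟨3, ?_⟩
    show c = c * 1
    simp only [ha, hb, hc, ha', hb', hc', hba, hba', hbcb, hbcb', hcac, hcac', hbcab, hbcab', one_mul, mul_one]
  · refine ⟨7, ?_⟩
    show c * (a) = c * (a)
    rfl
  · refine ⟨8, ?_⟩
    show c * (b) = c * (b)
    rfl
  · refine ⟨0, ?_⟩
    show 1 = c * (c)
    simp only [ha, hb, hc, ha', hb', hc', hba, hba', hbcb, hbcb', hcac, hcac', hbcab, hbcab', one_mul, mul_one]
  · refine ⟨13, ?_⟩
    show c * (a * (b)) = c * (a * (b))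
    rfl
  · refine ⟨10, ?_⟩
    show a * (c * (a)) = c * (a * (c))
    simp only [ha, hb, hc, ha', hb', hc', hba, hba', hbcb, hbcb', hcac, hcac', hbcab, hbcab', one_mul, mul_one]
  · refine ⟨14, ?_⟩
    show c * (b * (c)) = c * (b * (c))
    rfl
  · refine ⟨1, ?_⟩
    show a = c * (c * (a))
    simp only [ha, hb, hc, ha', hb', hc', hba, hba', hbcb, hbcb', hcac, hcac', hbcab, hbcab', one_mul, mul_one]
  · refine ⟨2, ?_⟩
    show b = c * (c * (b))
    simp only [ha, hb, hc, ha', hb', hc', hba, hba', hbcb, hbcb', hcac, hcac', hbcab, hbcab', one_mul, mul_one]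
  · refine ⟨18, ?_⟩
    show c * (a * (b * (c))) = c * (a * (b * (c)))
    rfl
  · refine ⟨5, ?_⟩
    show a * (c) = c * (a * (c * (a)))
    simp only [ha, hb, hc, ha', hb', hc', hba, hba', hbcb, hbcb', hcac, hcac', hbcab, hbcab', one_mul, mul_one]
  · refine ⟨16, ?_⟩
    show a * (c * (a * (b))) = c * (a * (c * (b)))
    simp only [ha, hb, hc, ha', hb', hc', hba, hba', hbcb, hbcb', hcac, hcac', hbcab, hbcab', one_mul, mul_one]
  · refine ⟨19, ?_⟩
    show c * (b * (c * (a))) = c * (b * (c * (a)))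
    rfl
  · refine ⟨4, ?_⟩
    show a * (b) = c * (c * (a * (b)))
    simp only [ha, hb, hc, ha', hb', hc', hba, hba', hbcb, hbcb', hcac, hcac', hbcab, hbcab', one_mul, mul_one]
  · refine ⟨6, ?_⟩
    show b * (c) = c * (c * (b * (c)))
    simp only [ha, hb, hc, ha', hb', hc', hba, hba', hbcb, hbcb', hcac, hcac', hbcab, hbcab', one_mul, mul_one]
  · refine ⟨22, ?_⟩
    show c * (a * (b * (c * (a)))) = c * (a * (b * (c * (a))))
    rfl
  · refine ⟨11, ?_⟩
    show a * (c * (b)) = c * (a * (c * (a * (b))))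
    simp only [ha, hb, hc, ha', hb', hc', hba, hba', hbcb, hbcb', hcac, hcac', hbcab, hbcab', one_mul, mul_one]
  · refine ⟨20, ?_⟩
    show a * (c * (a * (b * (c)))) = c * (a * (c * (b * (c))))
    simp only [ha, hb, hc, ha', hb', hc', hba, hba', hbcb, hbcb', hcac, hcac', hbcab, hbcab', one_mul, mul_one]
  · refine ⟨9, ?_⟩
    show a * (b * (c)) = c * (c * (a * (b * (c))))
    simp only [ha, hb, hc, ha', hb', hc', hba, hba', hbcb, hbcb', hcac, hcac', hbcab, hbcab', one_mul, mul_one]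
  · refine ⟨12, ?_⟩
    show b * (c * (a)) = c * (c * (b * (c * (a))))
    simp only [ha, hb, hc, ha', hb', hc', hba, hba', hbcb, hbcb', hcac, hcac', hbcab, hbcab', one_mul, mul_one]
  · refine ⟨17, ?_⟩
    show a * (c * (b * (c))) = c * (a * (c * (a * (b * (c)))))
    simp only [ha, hb, hc, ha', hb', hc', hba, hba', hbcb, hbcb', hcac, hcac', hbcab, hbcab', one_mul, mul_one]
  · refine ⟨23, ?_⟩
    show a * (c * (a * (b * (c * (a))))) = c * (a * (c * (b * (c * (a)))))
    simp only [ha, hb, hc, ha', hb', hc', hba, hba', hbcb, hbcb', hcac, hcac', hbcab, hbcab', one_mul, mul_one]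
  · refine ⟨15, ?_⟩
    show a * (b * (c * (a))) = c * (c * (a * (b * (c * (a)))))
    simp only [ha, hb, hc, ha', hb', hc', hba, hba', hbcb, hbcb', hcac, hcac', hbcab, hbcab', one_mul, mul_one]
  · refine ⟨21, ?_⟩
    show a * (c * (b * (c * (a)))) = c * (a * (c * (a * (b * (c * (a))))))
    simp only [ha, hb, hc, ha', hb', hc', hba, hba', hbcb, hbcb', hcac, hcac', hbcab, hbcab', one_mul, mul_one]


lemma v_mul : ∀ x : FreeGroup (Fin 3), ∀ p ∈ Set.range v,
    PresentedGroup.mk s4Rels x * p ∈ Set.range v := by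
  intro x
  induction x using FreeGroup.induction_on with
  | C1 => intro p hp; simpa using hp
  | of i =>
    fin_cases i
    · exact step_a
    · exact step_b
    · exact step_c
  | inv_of i ih =>
    intro p hp
    have hinv : (PresentedGroup.mk s4Rels (FreeGroup.of i))⁻¹
        = PresentedGroup.mk s4Rels (FreeGroup.of i) := by
      fin_cases i
      · exact inv_eq_of_mul_eq_one_right ha
      · exact inv_eq_of_mul_eq_one_right hb
      · exact inv_eq_of_mul_eq_one_right hc
    rw [map_inv, hinv]
    exact ih p hp
  | mul x y ihx ihy =>
    intro p hp
    rw [map_mul, mul_assoc]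
    exact ihx _ (ihy p hp)

lemma v_surj : Function.Surjective v := by
  intro p
  obtain ⟨x, rfl⟩ := PresentedGroup.mk_surjective s4Rels p
  have h1 : (1 : P) ∈ Set.range v := ⟨0, rfl⟩
  simpa using v_mul x 1 h1

def tau : Fin 3 → Equiv.Perm (Fin 4) := ![Equiv.swap 1 2, Equiv.swap 0 3, Equiv.swap 0 1]

lemma tau_rels : ∀ r ∈ s4Rels, FreeGroup.lift tau r = 1 := by
  intro r hr
  simp only [s4Rels, Set.mem_insert_iff, Set.mem_singleton_iff] at hr
  rcases hr with rfl|rfl|rfl|rfl|rfl|rfl|rfl|rfl <;>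
    · simp only [map_pow, map_mul, FreeGroup.lift_apply_of, tau]
      decide

def phi : P →* Equiv.Perm (Fin 4) := PresentedGroup.toGroup tau_rels

lemma phi_v : ∀ n, phi (v n) = u n := by
  intro n
  fin_cases n <;> rfl

lemma u_surj : Function.Surjective u := by decide

lemma phi_surj : Function.Surjective phi := by
  intro g
  obtain ⟨n, hn⟩ := u_surj g
  exact ⟨v n, by rw [phi_v n, hn]⟩

instance : Finite P := Finite.of_surjective v v_surj

lemma card_le : Nat.card P ≤ Nat.card (Equiv.Perm (Fin 4)) := by
  have h1 : Nat.card P ≤ Nat.card (Fin 24) := Nat.card_le_card_of_surjective v v_surj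
  have h2 : Nat.card (Equiv.Perm (Fin 4)) = 24 := by
    simp [Nat.card_eq_fintype_card, Fintype.card_perm, Fintype.card_fin]
    decide
  have h3 : Nat.card (Fin 24) = 24 := by simp
  omega
  
lemma phi_bij : Function.Bijective phi :=
  phi_surj.bijective_of_nat_card_le card_le

end S4Aux

theorem presented_group_iso_s4 :
    Nonempty (PresentedGroup s4Rels ≃* Equiv.Perm (Fin 4)) :=
  ⟨MulEquiv.ofBijective S4Aux.phi S4Aux.phi_bij⟩
end

section
/- Let p > 5 be prime. Then PSL(2,p) has an irredundant generating sequence of length 3 in which all three elements have order (p-1)/2. -/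
open scoped MatrixGroups

/-- A sequence `g : Fin n → G` is an irredundant generating sequence if it generates `G`
but deleting any single entry yields a non-generating sequence. -/
def IrredundantGenSeq {G : Type*} [Group G] {n : ℕ} (g : Fin n → G) : Prop :=
  Subgroup.closure (Set.range g) = ⊤ ∧
    ∀ i : Fin n, Subgroup.closure (g '' {i}ᶜ) ≠ ⊤

namespace AuxPSL
open Matrix

attribute [local simp↓] Matrix.SpecialLinearGroup.coe_mul Matrix.SpecialLinearGroup.coe_pow

variable {F : Type*} [Field F]

abbrev SL2 (F : Type*) [Field F] := Matrix.SpecialLinearGroup (Fin 2) F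

def u (t : F) : SL2 F := ⟨!![1, t; 0, 1], by simp [Matrix.det_fin_two_of]⟩
def l (t : F) : SL2 F := ⟨!![1, 0; t, 1], by simp [Matrix.det_fin_two_of]⟩

lemma u_mul (s t : F) : u s * u t = u (s + t) := by
  ext i j
  fin_cases i <;> fin_cases j <;>
    (simp [u, Matrix.mul_apply, Fin.sum_univ_succ]; try ring)

lemma l_mul (s t : F) : l s * l t = l (s + t) := by
  ext i j
  fin_cases i <;> fin_cases j <;>
    (simp [l, Matrix.mul_apply, Fin.sum_univ_succ]; try ring)

lemma u_pow (t : F) (n : ℕ) : u t ^ n = u (n • t) := by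
  induction n with
  | zero => ext i j; fin_cases i <;> fin_cases j <;> simp [u]
  | succ n ih => rw [pow_succ, ih, u_mul, succ_nsmul]

lemma l_pow (t : F) (n : ℕ) : l t ^ n = l (n • t) := by
  induction n with
  | zero => ext i j; fin_cases i <;> fin_cases j <;> simp [l]
  | succ n ih => rw [pow_succ, ih, l_mul, succ_nsmul]

lemma center_entries {Z : SL2 F} (hZ : Z ∈ Subgroup.center (SL2 F)) :
    Z.1 1 0 = 0 ∧ Z.1 0 1 = 0 ∧ Z.1 0 0 = Z.1 1 1 := by
  have hu := Subgroup.mem_center_iff.mp hZ (u 1)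
  have hl := Subgroup.mem_center_iff.mp hZ (l 1)
  have hu00 := congr_fun (congr_fun (congr_arg Subtype.val hu) 0) 0
  have hu01 := congr_fun (congr_fun (congr_arg Subtype.val hu) 0) 1
  have hl00 := congr_fun (congr_fun (congr_arg Subtype.val hl) 0) 0
  simp [u, l, Matrix.mul_apply, Fin.sum_univ_succ] at hu00 hu01 hl00
  exact ⟨hu00, hl00, by linear_combination -hu01⟩

lemma decomp (M : SL2 F) (hc : M.1 1 0 ≠ 0) :
    M = u ((M.1 0 0 - 1) * (M.1 1 0)⁻¹) * l (M.1 1 0) * u ((M.1 1 1 - 1) * (M.1 1 0)⁻¹) := by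
  have hdet : M.1 0 0 * M.1 1 1 - M.1 0 1 * M.1 1 0 = 1 := by
    rw [← Matrix.det_fin_two]; exact M.2
  ext i j
  fin_cases i <;> fin_cases j <;>
    simp [u, l, Matrix.mul_apply, Fin.sum_univ_succ]
  all_goals field_simp
  · linear_combination
  · linear_combination -hdet
  · linear_combination

lemma mem_of_ul {G : Type*} [Group G] (φ : SL2 F →* G) (H : Subgroup G)
    (hu : ∀ t, φ (u t) ∈ H) (hl : ∀ t, φ (l t) ∈ H) (M : SL2 F) : φ M ∈ H := by
  have key : ∀ N : SL2 F, N.1 1 0 ≠ 0 → φ N ∈ H := by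
    intro N hc
    rw [decomp N hc, _root_.map_mul, _root_.map_mul]
    exact H.mul_mem (H.mul_mem (hu _) (hl _)) (hu _)
  by_cases hc : M.1 1 0 ≠ 0
  · exact key M hc
  · push_neg at hc
    have hdet : M.1 0 0 * M.1 1 1 - M.1 0 1 * M.1 1 0 = 1 := by
      rw [← Matrix.det_fin_two]; exact M.2
    have ha : M.1 0 0 ≠ 0 := by
      intro h; rw [h, hc] at hdet; simp at hdet
    have h10 : ((l 1 * M)).1 1 0 = M.1 0 0 := by
      simp [l, Matrix.mul_apply, Fin.sum_univ_succ, hc]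
    have hm : φ (l 1 * M) ∈ H := key _ (by rw [h10]; exact ha)
    have hM : M = (l 1)⁻¹ * (l 1 * M) := by group
    rw [hM, _root_.map_mul, map_inv]
    exact H.mul_mem (H.inv_mem (hl 1)) hm

def wSL : SL2 F := ⟨!![0, 1; -1, 0], by simp [Matrix.det_fin_two_of]⟩

def UT : Subgroup (SL2 F) where
  carrier := {M | M.1 1 0 = 0}
  one_mem' := by simp
  mul_mem' := by
    intro a b ha hb
    show ((a * b : SL2 F)).1 1 0 = 0
    simp only [Set.mem_setOf_eq] at ha hb
    simp [Matrix.mul_apply, Fin.sum_univ_succ, ha, hb]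
  inv_mem' := by
    intro a ha
    simp only [Set.mem_setOf_eq] at ha ⊢
    rw [Matrix.SpecialLinearGroup.SL2_inv_expl]
    simp [ha]

def LT : Subgroup (SL2 F) where
  carrier := {M | M.1 0 1 = 0}
  one_mem' := by simp
  mul_mem' := by
    intro a b ha hb
    show ((a * b : SL2 F)).1 0 1 = 0
    simp only [Set.mem_setOf_eq] at ha hb
    simp [Matrix.mul_apply, Fin.sum_univ_succ, ha, hb]
  inv_mem' := by
    intro a ha
    simp only [Set.mem_setOf_eq] at ha ⊢
    rw [Matrix.SpecialLinearGroup.SL2_inv_expl]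
    simp [ha]

lemma mem_UT {M : SL2 F} : M ∈ (UT : Subgroup (SL2 F)) ↔ M.1 1 0 = 0 := Iff.rfl
lemma mem_LT {M : SL2 F} : M ∈ (LT : Subgroup (SL2 F)) ↔ M.1 0 1 = 0 := Iff.rfl

lemma w_notin_UT :
    QuotientGroup.mk' (Subgroup.center (SL2 F)) wSL ∉ Subgroup.map (QuotientGroup.mk' _) UT := by
  rintro ⟨M, hM, hMw⟩
  rw [QuotientGroup.mk'_eq_mk'] at hMw
  obtain ⟨Z, hZ, hMZ⟩ := hMw
  have h10 := congr_fun (congr_fun (congr_arg Subtype.val hMZ) 1) 0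
  rw [SetLike.mem_coe, mem_UT] at hM
  have hZ10 := (center_entries hZ).1
  simp [wSL, Matrix.mul_apply, Fin.sum_univ_succ, hM, hZ10] at h10

lemma w_notin_LT :
    QuotientGroup.mk' (Subgroup.center (SL2 F)) wSL ∉ Subgroup.map (QuotientGroup.mk' _) LT := by
  rintro ⟨M, hM, hMw⟩
  rw [QuotientGroup.mk'_eq_mk'] at hMw
  obtain ⟨Z, hZ, hMZ⟩ := hMw
  have h01 := congr_fun (congr_fun (congr_arg Subtype.val hMZ) 0) 1
  rw [SetLike.mem_coe, mem_LT] at hM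
  have hZ01 := (center_entries hZ).2.1
  simp [wSL, Matrix.mul_apply, Fin.sum_univ_succ, hM, hZ01] at h01

section Matrices

variable (x : F) (hx : x ≠ 0) (hz : x⁻¹ - x ≠ 0)

def y0 : F := x⁻¹ * (2 - x ^ 2 - x⁻¹ ^ 2)

def dA : SL2 F := ⟨!![x, 0; 0, x⁻¹], by simp [Matrix.det_fin_two_of, mul_inv_cancel₀ hx]⟩
def dB : SL2 F := ⟨!![x⁻¹, 0; x, x], by simp [Matrix.det_fin_two_of, inv_mul_cancel₀ hx]⟩
def dC : SL2 F := ⟨!![x⁻¹, y0 x; 0, x], by simp [Matrix.det_fin_two_of, inv_mul_cancel₀ hx]⟩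
def dD : SL2 F := ⟨!![x⁻¹, 0; 0, x], by simp [Matrix.det_fin_two_of, inv_mul_cancel₀ hx]⟩
def dQ : SL2 F :=
  ⟨!![x⁻¹ - x, 0; x, (x⁻¹ - x)⁻¹], by simp [Matrix.det_fin_two_of, mul_inv_cancel₀ hz]⟩
def dQi : SL2 F :=
  ⟨!![(x⁻¹ - x)⁻¹, 0; -x, x⁻¹ - x], by simp [Matrix.det_fin_two_of, inv_mul_cancel₀ hz]⟩

lemma hxy0 (hx : x ≠ 0) : x * y0 x = -(x⁻¹ - x) ^ 2 := by
  unfold y0; field_simp; ring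

lemma hAB : dA x hx * dB x hx = l 1 := by
  ext i j
  fin_cases i <;> fin_cases j <;>
    simp [dA, dB, l, Matrix.mul_apply, Fin.sum_univ_succ, inv_mul_cancel₀ hx,
      mul_inv_cancel₀ hx]

lemma hAC : dA x hx * dC x hx = u (x * y0 x) := by
  ext i j
  fin_cases i <;> fin_cases j <;>
    simp [dA, dC, u, Matrix.mul_apply, Fin.sum_univ_succ, mul_inv_cancel₀ hx,
      inv_mul_cancel₀ hx]

lemma hAD : dA x hx * dD x hx = 1 := by
  ext i j
  fin_cases i <;> fin_cases j <;>
    simp [dA, dD, Matrix.mul_apply, Fin.sum_univ_succ, mul_inv_cancel₀ hx,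
      inv_mul_cancel₀ hx]

lemma hD_inv : (dA x hx)⁻¹ = dD x hx := inv_eq_of_mul_eq_one_right (hAD x hx)

lemma hQQi : dQ x hz * dQi x hz = 1 := by
  have hz' : (-x + x⁻¹ : F) ≠ 0 := fun h => hz (by linear_combination h)
  ext i j
  fin_cases i <;> fin_cases j <;>
    simp [dQ, dQi, Matrix.mul_apply, Fin.sum_univ_succ, mul_inv_cancel₀ hz]
  all_goals first | ring1 | exact inv_mul_cancel₀ hz | linear_combination mul_inv_cancel₀ hz'

lemma hQi_inv : (dQ x hz)⁻¹ = dQi x hz := inv_eq_of_mul_eq_one_right (hQQi x hz)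

lemma hBconj : dB x hx = dQ x hz * dD x hx * (dQ x hz)⁻¹ := by
  rw [eq_mul_inv_iff_mul_eq]
  ext i j
  fin_cases i <;> fin_cases j <;>
    simp [dB, dQ, dD, Matrix.mul_apply, Fin.sum_univ_succ, inv_mul_cancel₀ hx]
  all_goals field_simp
  all_goals ring

lemma hCconj (hw : x - x⁻¹ ≠ 0) :
    dC x hx = u (y0 x * (x - x⁻¹)⁻¹) * dD x hx * (u (y0 x * (x - x⁻¹)⁻¹))⁻¹ := by
  have hs : y0 x * (x - x⁻¹)⁻¹ * (x - x⁻¹) = y0 x := by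
    rw [mul_assoc, inv_mul_cancel₀ hw, mul_one]
  rw [eq_mul_inv_iff_mul_eq]
  ext i j
  fin_cases i <;> fin_cases j <;>
    simp [dC, dD, u, Matrix.mul_apply, Fin.sum_univ_succ]
  all_goals linear_combination -hs

lemma hQCQ : (dQi x hz * dC x hx * dQ x hz).1 1 0 = 0 := by
  show ((dQi x hz * dC x hx * dQ x hz : SL2 F)).1 1 0 = 0
  simp [dQi, dC, dQ, Matrix.mul_apply, Fin.sum_univ_succ]
  unfold y0
  field_simp
  ring

lemma dA_pow (k : ℕ) : ((dA x hx) ^ k).1 = !![x ^ k, 0; 0, x⁻¹ ^ k] := by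
  induction k with
  | zero => ext i j; fin_cases i <;> fin_cases j <;> simp [dA]
  | succ k ih =>
    rw [pow_succ]
    show ((dA x hx) ^ k).1 * (dA x hx).1 = _
    rw [ih]
    ext i j
    fin_cases i <;> fin_cases j <;>
      (simp [dA, Matrix.mul_apply, Fin.sum_univ_succ]; try ring)

lemma order_keyA (k : ℕ) :
    (QuotientGroup.mk' (Subgroup.center (SL2 F)) (dA x hx)) ^ k = 1 ↔ x ^ (2 * k) = 1 := by
  rw [← map_pow, QuotientGroup.mk'_apply, QuotientGroup.eq_one_iff]
  constructor
  · intro h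
    have h3 := (center_entries h).2.2
    rw [dA_pow x hx k] at h3
    simp at h3
    calc x ^ (2 * k) = x ^ k * x ^ k := by rw [two_mul, pow_add]
    _ = x ^ k * (x ^ k)⁻¹ := by rw [← h3]
    _ = 1 := mul_inv_cancel₀ (pow_ne_zero _ hx)
  · intro h
    have hxk : x⁻¹ ^ k = x ^ k := by
      rw [inv_pow]
      exact inv_eq_of_mul_eq_one_left (by rw [← pow_add, ← two_mul, h])
    rw [Subgroup.mem_center_iff]
    intro g
    ext i j
    show (g.1 * ((dA x hx) ^ k).1) i j = (((dA x hx) ^ k).1 * g.1) i j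
    rw [dA_pow x hx k, hxk]
    fin_cases i <;> fin_cases j <;>
      (simp [Matrix.mul_apply, Fin.sum_univ_succ]; try ring)

end Matrices
end AuxPSL

theorem exists_irredundant_triple_of_order_half_p_sub_one
    (p : ℕ) [Fact p.Prime] (hp : 5 < p) :
    ∃ g : Fin 3 → PSL(2, ZMod p),
      IrredundantGenSeq g ∧ ∀ i, orderOf (g i) = (p - 1) / 2 := by
  classical
  obtain ⟨ζ, hζ⟩ := IsCyclic.exists_ofOrder_eq_natCard (α := (ZMod p)ˣ)
  rw [Nat.card_eq_fintype_card, ZMod.card_units] at hζ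
  set x : ZMod p := (ζ : ZMod p) with hxdef
  have hord : ∀ k : ℕ, x ^ k = 1 ↔ (p - 1) ∣ k := by
    intro k
    rw [show (x ^ k = 1) ↔ (ζ ^ k = 1) from by
      rw [Units.ext_iff, Units.val_pow_eq_pow_val, Units.val_one], ← hζ]
    exact orderOf_dvd_iff_pow_eq_one.symm
  have hx : x ≠ 0 := ζ.ne_zero
  have hpp : p.Prime := Fact.out
  have hp2 : 2 ∣ p - 1 := by
    obtain ⟨m, hm⟩ := hpp.odd_of_ne_two (by omega)
    exact ⟨m, by omega⟩
  have hx2 : x ^ 2 ≠ 1 := by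
    intro h
    have := Nat.le_of_dvd (by norm_num) ((hord 2).mp h)
    omega
  have hz : x⁻¹ - x ≠ 0 := by
    intro h
    apply hx2
    have hxx : x⁻¹ = x := by linear_combination h
    calc x ^ 2 = x * x := sq x
    _ = x * x⁻¹ := by rw [hxx]
    _ = 1 := mul_inv_cancel₀ hx
  have hw : x - x⁻¹ ≠ 0 := fun h => hz (by linear_combination -h)
  set π := QuotientGroup.mk' (Subgroup.center (AuxPSL.SL2 (ZMod p))) with hπdef
  set A := AuxPSL.dA x hx with hAdef
  set B := AuxPSL.dB x hx with hBdef
  set C := AuxPSL.dC x hx with hCdef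
  set D := AuxPSL.dD x hx with hDdef
  set Q := AuxPSL.dQ x hz with hQdef
  set g : Fin 3 → PSL(2, ZMod p) := ![π A, π B, π C] with hgdef
  have hg0 : g 0 = π A := rfl
  have hg1 : g 1 = π B := rfl
  have hg2 : g 2 = π C := rfl
  -- conjugation facts
  have hBc : π B = π Q * π D * (π Q)⁻¹ := by
    rw [← map_inv, ← map_mul, ← map_mul, hBdef, hQdef, hDdef, ← AuxPSL.hBconj x hx hz]
  have hQi : π (AuxPSL.dQi x hz) = (π Q)⁻¹ := by
    rw [hQdef, ← map_inv, AuxPSL.hQi_inv x hz]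
  have hCc : π C = π (AuxPSL.u (AuxPSL.y0 x * (x - x⁻¹)⁻¹)) * π D *
      (π (AuxPSL.u (AuxPSL.y0 x * (x - x⁻¹)⁻¹)))⁻¹ := by
    rw [← map_inv, ← map_mul, ← map_mul, hCdef, hDdef, ← AuxPSL.hCconj x hx hw]
  -- the three proper subgroups
  set HUT := Subgroup.map π AuxPSL.UT with hHUTdef
  set HLT := Subgroup.map π AuxPSL.LT with hHLTdef
  set H0 := Subgroup.comap (MulAut.conj ((π Q)⁻¹)).toMonoidHom HUT with hH0def
  have hUTne : HUT ≠ ⊤ := by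
    intro htop
    have hmem : π AuxPSL.wSL ∈ HUT := by rw [htop]; exact Subgroup.mem_top _
    exact AuxPSL.w_notin_UT (F := ZMod p) hmem
  have hLTne : HLT ≠ ⊤ := by
    intro htop
    have hmem : π AuxPSL.wSL ∈ HLT := by rw [htop]; exact Subgroup.mem_top _
    exact AuxPSL.w_notin_LT (F := ZMod p) hmem
  have hH0ne : H0 ≠ ⊤ := by
    intro htop
    apply AuxPSL.w_notin_UT (F := ZMod p)
    have hmem : π Q * π AuxPSL.wSL * (π Q)⁻¹ ∈ H0 := htop ▸ Subgroup.mem_top _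
    rw [hH0def, Subgroup.mem_comap] at hmem
    have e : (MulAut.conj ((π Q)⁻¹)).toMonoidHom (π Q * π AuxPSL.wSL * (π Q)⁻¹)
        = π AuxPSL.wSL := by
      show (π Q)⁻¹ * (π Q * π AuxPSL.wSL * (π Q)⁻¹) * ((π Q)⁻¹)⁻¹ = π AuxPSL.wSL
      group
    rw [e] at hmem
    exact hmem
  have hAinUT : π A ∈ HUT := by
    rw [hHUTdef, Subgroup.mem_map]
    exact ⟨A, by rw [AuxPSL.mem_UT]; simp [hAdef, AuxPSL.dA], rfl⟩
  have hCinUT : π C ∈ HUT := by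
    rw [hHUTdef, Subgroup.mem_map]
    exact ⟨C, by rw [AuxPSL.mem_UT]; simp [hCdef, AuxPSL.dC], rfl⟩
  have hAinLT : π A ∈ HLT := by
    rw [hHLTdef, Subgroup.mem_map]
    exact ⟨A, by rw [AuxPSL.mem_LT]; simp [hAdef, AuxPSL.dA], rfl⟩
  have hBinLT : π B ∈ HLT := by
    rw [hHLTdef, Subgroup.mem_map]
    exact ⟨B, by rw [AuxPSL.mem_LT]; simp [hBdef, AuxPSL.dB], rfl⟩
  have hBinH0 : π B ∈ H0 := by
    rw [hH0def, Subgroup.mem_comap]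
    have e : (MulAut.conj ((π Q)⁻¹)).toMonoidHom (π B) = π D := by
      show (π Q)⁻¹ * (π B) * ((π Q)⁻¹)⁻¹ = π D
      rw [hBc]; group
    rw [e, hHUTdef, Subgroup.mem_map]
    exact ⟨D, by rw [AuxPSL.mem_UT]; simp [hDdef, AuxPSL.dD], rfl⟩
  have hCinH0 : π C ∈ H0 := by
    rw [hH0def, Subgroup.mem_comap]
    have e : (MulAut.conj ((π Q)⁻¹)).toMonoidHom (π C) =
        π (AuxPSL.dQi x hz * C * Q) := by
      show (π Q)⁻¹ * (π C) * ((π Q)⁻¹)⁻¹ = π (AuxPSL.dQi x hz * C * Q)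
      rw [map_mul, map_mul, hQi]
      group
    rw [e, hHUTdef, Subgroup.mem_map]
    exact ⟨AuxPSL.dQi x hz * C * Q, AuxPSL.hQCQ x hx hz, rfl⟩
  refine ⟨g, ⟨?_, ?_⟩, ?_⟩
  · -- generation
    have hA : π A ∈ Subgroup.closure (Set.range g) :=
      Subgroup.subset_closure ⟨0, rfl⟩
    have hB : π B ∈ Subgroup.closure (Set.range g) :=
      Subgroup.subset_closure ⟨1, rfl⟩
    have hC : π C ∈ Subgroup.closure (Set.range g) :=
      Subgroup.subset_closure ⟨2, rfl⟩
    have hu1 : π (AuxPSL.u (x * AuxPSL.y0 x)) ∈ Subgroup.closure (Set.range g) := by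
      rw [← AuxPSL.hAC x hx, map_mul]
      exact mul_mem hA hC
    have hl1 : π (AuxPSL.l (1 : ZMod p)) ∈ Subgroup.closure (Set.range g) := by
      rw [← AuxPSL.hAB x hx, map_mul]
      exact mul_mem hA hB
    have ht : (x * AuxPSL.y0 x) ≠ 0 := by
      rw [AuxPSL.hxy0 x hx]
      intro h
      exact hz (pow_eq_zero_iff two_ne_zero |>.mp (neg_eq_zero.mp h))
    have hus : ∀ a : ZMod p, π (AuxPSL.u a) ∈ Subgroup.closure (Set.range g) := by
      intro a
      have heq : AuxPSL.u a
          = AuxPSL.u (x * AuxPSL.y0 x) ^ (a * (x * AuxPSL.y0 x)⁻¹).val := by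
        rw [AuxPSL.u_pow]
        congr 1
        rw [nsmul_eq_mul, ZMod.natCast_val, ZMod.cast_id]
        field_simp [right_ne_zero_of_mul ht]
      rw [heq, map_pow]
      exact pow_mem hu1 _
    have hls : ∀ a : ZMod p, π (AuxPSL.l a) ∈ Subgroup.closure (Set.range g) := by
      intro a
      have heq : AuxPSL.l a = AuxPSL.l (1 : ZMod p) ^ a.val := by
        rw [AuxPSL.l_pow]
        congr 1
        rw [nsmul_eq_mul, mul_one, ZMod.natCast_val, ZMod.cast_id]
      rw [heq, map_pow]
      exact pow_mem hl1 _
    rw [Subgroup.eq_top_iff']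
    intro q
    obtain ⟨M, rfl⟩ := QuotientGroup.mk'_surjective _ q
    exact AuxPSL.mem_of_ul π _ hus hls M
  · -- irredundancy
    intro i htop
    fin_cases i
    · -- delete A : remaining B, C lie in H0
      refine hH0ne (top_le_iff.mp ?_)
      rw [← htop]
      refine (Subgroup.closure_le H0).mpr ?_
      rintro z ⟨j, hj, rfl⟩
      fin_cases j
      · simp at hj
      · exact hBinH0
      · exact hCinH0
    · -- delete B : remaining A, C upper triangular
      refine hUTne (top_le_iff.mp ?_)
      rw [← htop]
      refine (Subgroup.closure_le HUT).mpr ?_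
      rintro z ⟨j, hj, rfl⟩
      fin_cases j
      · exact hAinUT
      · simp at hj
      · exact hCinUT
    · -- delete C : remaining A, B lower triangular
      refine hLTne (top_le_iff.mp ?_)
      rw [← htop]
      refine (Subgroup.closure_le HLT).mpr ?_
      rintro z ⟨j, hj, rfl⟩
      fin_cases j
      · exact hAinLT
      · exact hBinLT
      · simp at hj
  · -- orders
    have hkey : ∀ k, (π A) ^ k = 1 ↔ (p - 1) ∣ 2 * k :=
      fun k => (AuxPSL.order_keyA x hx k).trans (hord (2 * k))
    have hpos : 0 < (p - 1) / 2 := by omega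
    have hc : p - 1 = 2 * ((p - 1) / 2) := (Nat.mul_div_cancel' hp2).symm
    have hordA : orderOf (π A) = (p - 1) / 2 := by
      rw [orderOf_eq_iff hpos]
      constructor
      · exact (hkey _).mpr (by rw [← hc])
      · intro m hm hm0 h1
        have := Nat.le_of_dvd (by omega) ((hkey m).mp h1)
        omega
    have hordD : orderOf (π D) = (p - 1) / 2 := by
      rw [hDdef, ← AuxPSL.hD_inv x hx, map_inv, orderOf_inv]
      exact hordA
    have hordB : orderOf (π B) = (p - 1) / 2 := by
      rw [hBc, ← (SemiconjBy.orderOf_eq (π Q)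
        (show SemiconjBy (π Q) (π D) (π Q * π D * (π Q)⁻¹) by unfold SemiconjBy; group))]
      exact hordD
    have hordC : orderOf (π C) = (p - 1) / 2 := by
      rw [hCc, ← (SemiconjBy.orderOf_eq (π (AuxPSL.u (AuxPSL.y0 x * (x - x⁻¹)⁻¹)))
        (show SemiconjBy (π (AuxPSL.u (AuxPSL.y0 x * (x - x⁻¹)⁻¹))) (π D)
          (π (AuxPSL.u (AuxPSL.y0 x * (x - x⁻¹)⁻¹)) * π D *
            (π (AuxPSL.u (AuxPSL.y0 x * (x - x⁻¹)⁻¹)))⁻¹) by unfold SemiconjBy; group))]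
      exact hordD
    intro i
    fin_cases i
    · exact hordA
    · exact hordB
    · exact hordC
end

section
/- Let B = [[1/x,0],[x,x]] and C = [[1/x,y],[0,x]] in SL(2,p) with x ∈ F_p^* and y = -x + 2/x - 1/x^3. Then the cyclic subgroup generated by BC is normal in the subgroup generated by B and C; consequently ⟨B, C⟩ is a proper subgroup of SL(2,p) when p > 3. -/
set_option maxHeartbeats 1000000

section Aux

variable {p : ℕ} [Fact p.Prime]

private lemma SL2_cancel (g : Matrix.SpecialLinearGroup (Fin 2) (ZMod p))
    {P Q : Matrix (Fin 2) (Fin 2) (ZMod p)}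
    (h : P * (g : Matrix (Fin 2) (Fin 2) (ZMod p)) = Q * g) : P = Q := by
  have h3 : ((g : Matrix (Fin 2) (Fin 2) (ZMod p)))
      * ((g⁻¹ : Matrix.SpecialLinearGroup (Fin 2) (ZMod p)) : Matrix (Fin 2) (Fin 2) (ZMod p)) = 1 := by
    rw [← Matrix.SpecialLinearGroup.coe_mul, mul_inv_cancel]; rfl
  have h2 := congrArg
    (fun M => M * ((g⁻¹ : Matrix.SpecialLinearGroup (Fin 2) (ZMod p)) : Matrix (Fin 2) (Fin 2) (ZMod p))) h
  simp only [mul_assoc, h3, mul_one] at h2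
  exact h2

private lemma inv_coe_SL2 (g : Matrix.SpecialLinearGroup (Fin 2) (ZMod p)) :
    ((g⁻¹ : Matrix.SpecialLinearGroup (Fin 2) (ZMod p)) : Matrix (Fin 2) (Fin 2) (ZMod p))
      * (g : Matrix (Fin 2) (Fin 2) (ZMod p)) = 1 := by
  rw [← Matrix.SpecialLinearGroup.coe_mul, inv_mul_cancel]; rfl

private lemma one_add_smul_mul {N : Matrix (Fin 2) (Fin 2) (ZMod p)} (hN2 : N * N = 0)
    (c d : ZMod p) :
    (1 + c • N) * (1 + d • N) = 1 + (c + d) • N := by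
  have h : (c • N) * (d • N) = (c * d) • (N * N) := by
    rw [Matrix.smul_mul, Matrix.mul_smul, smul_smul]
  rw [mul_add, add_mul, add_mul, one_mul, one_mul, mul_one, h, hN2, smul_zero, add_zero, add_smul]
  abel

end Aux

theorem zpowers_BC_normal_and_proper (p : ℕ) [Fact p.Prime]
    (x : ZMod p) (hx : x ≠ 0)
    (B C : Matrix.SpecialLinearGroup (Fin 2) (ZMod p))
    (hB : (B : Matrix (Fin 2) (Fin 2) (ZMod p)) = !![x⁻¹, 0; x, x])
    (hC : (C : Matrix (Fin 2) (Fin 2) (ZMod p)) =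
      !![x⁻¹, -x + 2 * x⁻¹ - (x ^ 3)⁻¹; 0, x]) :
    ((Subgroup.zpowers (B * C)).subgroupOf (Subgroup.closure {B, C})).Normal ∧
    (3 < p → Subgroup.closure {B, C} ≠ ⊤) := by
  set u : ZMod p := x⁻¹ * x⁻¹ - 1 with hu
  set N : Matrix (Fin 2) (Fin 2) (ZMod p) := !![u, -(u*u); 1, -u] with hNdef
  have hN2 : N * N = 0 := by
    rw [hNdef, Matrix.mul_fin_two]
    ext i j
    fin_cases i <;> fin_cases j <;> simp <;> ring
  have hBC : (((B * C) : Matrix.SpecialLinearGroup (Fin 2) (ZMod p)) : Matrix (Fin 2) (Fin 2) (ZMod p))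
      = 1 + N := by
    rw [Matrix.SpecialLinearGroup.coe_mul, hB, hC, hNdef, Matrix.mul_fin_two, Matrix.one_fin_two]
    ext i j
    fin_cases i <;> fin_cases j <;>
      · simp [hu, smul_eq_mul]
        all_goals field_simp
        all_goals try rw [eq_div_iff (by simp [mul_eq_zero, hx])]
        all_goals try rw [div_eq_iff (by simp [mul_eq_zero, hx])]
        all_goals try ring
        all_goals field_simp
        all_goals ring
  -- conjugation relations for the generators
  have hBN : (B : Matrix (Fin 2) (Fin 2) (ZMod p)) * N
      = (x⁻¹ * x⁻¹) • (N * (B : Matrix (Fin 2) (Fin 2) (ZMod p))) := by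
    rw [hB, hNdef, Matrix.mul_fin_two, Matrix.mul_fin_two, Matrix.smul_of]
    ext i j
    fin_cases i <;> fin_cases j <;>
      · simp [hu, smul_eq_mul]
        all_goals field_simp
        all_goals try rw [eq_div_iff (by simp [mul_eq_zero, hx])]
        all_goals try rw [div_eq_iff (by simp [mul_eq_zero, hx])]
        all_goals try ring
        all_goals field_simp
        all_goals ring
  have hCN : (C : Matrix (Fin 2) (Fin 2) (ZMod p)) * N
      = (x * x) • (N * (C : Matrix (Fin 2) (Fin 2) (ZMod p))) := by
    rw [hC, hNdef, Matrix.mul_fin_two, Matrix.mul_fin_two, Matrix.smul_of]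
    ext i j
    fin_cases i <;> fin_cases j <;>
      · simp [hu, smul_eq_mul]
        all_goals field_simp
        all_goals try rw [eq_div_iff (by simp [mul_eq_zero, hx])]
        all_goals try rw [div_eq_iff (by simp [mul_eq_zero, hx])]
        all_goals try ring
        all_goals field_simp
        all_goals ring
  -- every element of the closure almost-commutes with N
  have comm : ∀ g ∈ Subgroup.closure ({B, C} : Set (Matrix.SpecialLinearGroup (Fin 2) (ZMod p))),
      ∃ s : ZMod p, s ≠ 0 ∧
      (g : Matrix (Fin 2) (Fin 2) (ZMod p)) * N = s • (N * (g : Matrix (Fin 2) (Fin 2) (ZMod p))) := by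
    intro g hg
    induction hg using Subgroup.closure_induction with
    | mem g hg =>
      rcases hg with rfl | rfl
      · exact ⟨x⁻¹ * x⁻¹, by simp [hx], hBN⟩
      · exact ⟨x * x, by simp [hx], hCN⟩
    | one => exact ⟨1, one_ne_zero, by simp⟩
    | mul a b ha hb iha ihb =>
      obtain ⟨s, hs, hsc⟩ := iha
      obtain ⟨t, ht, htc⟩ := ihb
      refine ⟨s * t, mul_ne_zero hs ht, ?_⟩
      rw [Matrix.SpecialLinearGroup.coe_mul, mul_assoc, htc, Matrix.mul_smul,
        ← mul_assoc, hsc]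
      rw [Matrix.smul_mul, smul_smul, mul_comm s t, mul_assoc]
    | inv a ha iha =>
      obtain ⟨s, hs, hsc⟩ := iha
      refine ⟨s⁻¹, inv_ne_zero hs, ?_⟩
      apply SL2_cancel a
      have h1 := inv_coe_SL2 (p := p) a
      have hNa : N * (a : Matrix (Fin 2) (Fin 2) (ZMod p))
          = s⁻¹ • ((a : Matrix (Fin 2) (Fin 2) (ZMod p)) * N) := by
        rw [hsc, smul_smul, inv_mul_cancel₀ hs, one_smul]
      calc ((a⁻¹ : Matrix.SpecialLinearGroup (Fin 2) (ZMod p)) : Matrix (Fin 2) (Fin 2) (ZMod p)) * N * (a : Matrix (Fin 2) (Fin 2) (ZMod p))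
          = ((a⁻¹ : Matrix.SpecialLinearGroup (Fin 2) (ZMod p)) : Matrix (Fin 2) (Fin 2) (ZMod p)) * (N * (a : Matrix (Fin 2) (Fin 2) (ZMod p))) := by
            rw [mul_assoc]
        _ = s⁻¹ • (((a⁻¹ : Matrix.SpecialLinearGroup (Fin 2) (ZMod p)) : Matrix (Fin 2) (Fin 2) (ZMod p)) * ((a : Matrix (Fin 2) (Fin 2) (ZMod p)) * N)) := by
            rw [hNa, Matrix.mul_smul]
        _ = s⁻¹ • N := by rw [← mul_assoc, h1, one_mul]
        _ = s⁻¹ • (N * (((a⁻¹ : Matrix.SpecialLinearGroup (Fin 2) (ZMod p)) : Matrix (Fin 2) (Fin 2) (ZMod p)) * (a : Matrix (Fin 2) (Fin 2) (ZMod p)))) := by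
            rw [h1, mul_one]
        _ = s⁻¹ • (N * ((a⁻¹ : Matrix.SpecialLinearGroup (Fin 2) (ZMod p)) : Matrix (Fin 2) (Fin 2) (ZMod p))) * (a : Matrix (Fin 2) (Fin 2) (ZMod p)) := by
            rw [Matrix.smul_mul, mul_assoc]
  -- powers of B*C
  have powNat : ∀ k : ℕ, ((((B * C) ^ k : Matrix.SpecialLinearGroup (Fin 2) (ZMod p))) : Matrix (Fin 2) (Fin 2) (ZMod p)) = 1 + (k : ZMod p) • N := by
    intro k
    induction k with
    | zero => simp
    | succ k ih =>
      rw [pow_succ, Matrix.SpecialLinearGroup.coe_mul, ih, hBC]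
      nth_rewrite 2 [show N = (1 : ZMod p) • N by rw [one_smul]]
      rw [one_add_smul_mul hN2]
      push_cast
      ring_nf
  have invCoe : ∀ (A : Matrix.SpecialLinearGroup (Fin 2) (ZMod p)) (c : ZMod p),
      (A : Matrix (Fin 2) (Fin 2) (ZMod p)) = 1 + c • N →
      ((A⁻¹ : Matrix.SpecialLinearGroup (Fin 2) (ZMod p)) : Matrix (Fin 2) (Fin 2) (ZMod p)) = 1 + (-c) • N := by
    intro A c hA
    apply SL2_cancel A
    rw [inv_coe_SL2, hA, one_add_smul_mul hN2]
    simp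
  have powInt : ∀ k : ℤ, ((((B * C) ^ k : Matrix.SpecialLinearGroup (Fin 2) (ZMod p))) : Matrix (Fin 2) (Fin 2) (ZMod p)) = 1 + (k : ZMod p) • N := by
    intro k
    cases k with
    | ofNat n =>
      rw [Int.ofNat_eq_coe, zpow_natCast, powNat]
      push_cast
      rfl
    | negSucc n =>
      rw [zpow_negSucc]
      rw [invCoe ((B * C) ^ (n + 1)) ((n + 1 : ℕ) : ZMod p) (powNat (n + 1))]
      push_cast
      ring_nf
  -- membership characterization
  have mem_iff : ∀ A : Matrix.SpecialLinearGroup (Fin 2) (ZMod p), A ∈ Subgroup.zpowers (B * C) ↔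
      ∃ c : ZMod p, (A : Matrix (Fin 2) (Fin 2) (ZMod p)) = 1 + c • N := by
    intro A
    constructor
    · rintro ⟨k, rfl⟩
      exact ⟨(k : ZMod p), powInt k⟩
    · rintro ⟨c, hc⟩
      refine ⟨(c.val : ℤ), ?_⟩
      apply Subtype.coe_injective
      show ((((B * C) ^ ((c.val : ℤ)) : Matrix.SpecialLinearGroup (Fin 2) (ZMod p))) : Matrix (Fin 2) (Fin 2) (ZMod p))
        = (A : Matrix (Fin 2) (Fin 2) (ZMod p))
      rw [powInt, hc]
      congr 2
      push_cast
      simp [ZMod.natCast_val, ZMod.cast_id]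
  constructor
  · -- normality
    constructor
    intro n hn g
    rw [Subgroup.mem_subgroupOf] at hn ⊢
    rw [mem_iff] at hn ⊢
    obtain ⟨c, hc⟩ := hn
    obtain ⟨s, hs, hsc⟩ := comm (g : Matrix.SpecialLinearGroup (Fin 2) (ZMod p)) g.2
    refine ⟨c * s, ?_⟩
    have hcoe : (((g * n * g⁻¹ : Subgroup.closure ({B, C} : Set (Matrix.SpecialLinearGroup (Fin 2) (ZMod p)))) : Matrix.SpecialLinearGroup (Fin 2) (ZMod p)) : Matrix (Fin 2) (Fin 2) (ZMod p))
        = ((g : Matrix.SpecialLinearGroup (Fin 2) (ZMod p)) : Matrix (Fin 2) (Fin 2) (ZMod p))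
          * ((n : Matrix.SpecialLinearGroup (Fin 2) (ZMod p)) : Matrix (Fin 2) (Fin 2) (ZMod p))
          * ((((g : Matrix.SpecialLinearGroup (Fin 2) (ZMod p)))⁻¹ : Matrix.SpecialLinearGroup (Fin 2) (ZMod p)) : Matrix (Fin 2) (Fin 2) (ZMod p)) := by
      rfl
    rw [hcoe]
    apply SL2_cancel ((g : Matrix.SpecialLinearGroup (Fin 2) (ZMod p)))
    rw [mul_assoc, mul_assoc, inv_coe_SL2, mul_one, hc, mul_add, add_mul, mul_one, one_mul,
      Matrix.mul_smul, hsc, smul_smul, Matrix.smul_mul]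
  · -- properness
    intro _ htop
    have hD : ∃ D : Matrix.SpecialLinearGroup (Fin 2) (ZMod p),
        (D : Matrix (Fin 2) (Fin 2) (ZMod p)) = !![1, 1; 0, 1] := by
      refine ⟨⟨!![1, 1; 0, 1], ?_⟩, rfl⟩
      simp [Matrix.det_fin_two]
    obtain ⟨D, hDc⟩ := hD
    have hDmem : D ∈ Subgroup.closure ({B, C} : Set (Matrix.SpecialLinearGroup (Fin 2) (ZMod p))) :=
      htop ▸ Subgroup.mem_top D
    obtain ⟨s, hs, hsc⟩ := comm D hDmem
    rw [hDc, hNdef, Matrix.mul_fin_two, Matrix.mul_fin_two, Matrix.smul_of] at hsc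
    have h10 := congrFun (congrFun hsc 1) 0
    have h00 := congrFun (congrFun hsc 0) 0
    simp at h10 h00
    rw [← h10] at h00
    simp at h00
end

section
/- Let G be a finite group with m(G) = m. Suppose that for every irredundant generating sequence s = (g_1,...,g_m) of length m and every associated family F = {M_1,...,M_m} of maximal subgroups in general position corresponding to s, there is an index (say m) such that M_m = ⟨g_1,...,g_{m-1}⟩, m(M_m) = m - 1, and M_m satisfies the replacement property. Then G satisfies the replacement property. -/
/-- `maxIrr G` is the maximum length of an irredundant generating sequence of `G`. -/
noncomputable def maxIrr (G : Type*) [Group G] : ℕ :=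
  sSup {n | ∃ g : Fin n → G, IrredundantGenSeq g}

/-- `G` satisfies the replacement property if in every irredundant generating sequence of
maximal length, any nonidentity element can replace some entry so that the result
still generates. -/
def ReplacementProperty (G : Type*) [Group G] : Prop :=
  ∀ g : Fin (maxIrr G) → G, IrredundantGenSeq g → ∀ h : G, h ≠ 1 →
    ∃ i, Subgroup.closure (Set.range (Function.update g i h)) = ⊤

/-- Closure in a subgroup is top iff closure of the coerced image in the ambient group
is the subgroup. -/
lemma closure_coe_image_eq_iff {G : Type*} [Group G] (H : Subgroup G) (t : Set H) :
    Subgroup.closure t = ⊤ ↔ Subgroup.closure ((↑) '' t : Set G) = H := by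
  have himg : (⇑H.subtype '' t : Set G) = (↑) '' t := rfl
  constructor
  · intro ht
    have := congrArg (Subgroup.map H.subtype) ht
    rwa [MonoidHom.map_closure, ← MonoidHom.range_eq_map, Subgroup.range_subtype, himg]
      at this
  · intro ht
    apply Subgroup.map_injective H.subtype_injective
    rw [MonoidHom.map_closure, ← MonoidHom.range_eq_map, Subgroup.range_subtype, himg]
    exact ht

theorem replacement_property_criterion {G : Type*} [Group G] [Finite G]
    (hyp : ∀ g : Fin (maxIrr G) → G, IrredundantGenSeq g →
      ∀ M : Fin (maxIrr G) → Subgroup G,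
        (∀ i, IsCoatom (M i)) →
        (∀ i, g i ∉ M i) →
        (∀ i j, j ≠ i → g j ∈ M i) →
        (∀ J K : Finset (Fin (maxIrr G)), K ⊂ J → (⨅ i ∈ J, M i) < ⨅ i ∈ K, M i) →
        ∃ i, M i = Subgroup.closure (g '' {i}ᶜ) ∧
          maxIrr (M i) = maxIrr G - 1 ∧ ReplacementProperty (M i)) :
    ReplacementProperty G := by
  intro g hg h hh
  classical
  -- choose a corresponding family of maximal subgroups
  have exM : ∀ i : Fin (maxIrr G),
      ∃ N : Subgroup G, IsCoatom N ∧ Subgroup.closure (g '' {i}ᶜ) ≤ N := by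
    intro i
    rcases eq_top_or_exists_le_coatom (Subgroup.closure (g '' {i}ᶜ)) with hc | hc
    · exact absurd hc (hg.2 i)
    · exact hc
  choose M hMco hMle using exM
  have hMmem : ∀ i j, j ≠ i → g j ∈ M i :=
    fun i j hj => hMle i (Subgroup.subset_closure ⟨j, hj, rfl⟩)
  have hMnot : ∀ i, g i ∉ M i := by
    intro i hi
    refine (hMco i).1 (top_unique ?_)
    rw [← hg.1]
    refine (Subgroup.closure_le _).2 ?_
    rintro x ⟨j, rfl⟩
    by_cases hj : j = i
    · subst hj; exact hi
    · exact hMmem i j hj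
  have hgen : ∀ J K : Finset (Fin (maxIrr G)), K ⊂ J →
      (⨅ i ∈ J, M i) < ⨅ i ∈ K, M i := by
    intro J K hJK
    obtain ⟨i, hiJ, hiK⟩ := Finset.exists_of_ssubset hJK
    refine lt_of_le_of_ne (le_iInf₂ fun j hj => iInf₂_le j (hJK.1 hj)) fun he => ?_
    have h1 : g i ∈ ⨅ j ∈ K, M j := by
      simp only [Subgroup.mem_iInf]
      intro j hj
      exact hMmem j i (fun hij => hiK (hij ▸ hj))
    rw [← he] at h1
    simp only [Subgroup.mem_iInf] at h1
    exact hMnot i (h1 i hiJ)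
  obtain ⟨i₀, hHeq, hmax, hrep⟩ := hyp g hg M hMco hMnot hMmem hgen
  set H := M i₀ with hHdef
  have hcoH : IsCoatom H := hMco i₀
  have hgi₀ : g i₀ ∉ H := hMnot i₀
  have hsub : g '' {i₀}ᶜ ⊆ (H : Set G) := by
    rw [hHeq]; exact Subgroup.subset_closure
  by_cases hmem : h ∈ H
  · -- h lies in the distinguished maximal subgroup; use the replacement property of H.
    have hcard : Fintype.card (Fin (maxIrr H)) =
        Fintype.card {j : Fin (maxIrr G) // ¬ (j = i₀)} := by
      rw [Fintype.card_subtype_compl, Fintype.card_subtype_eq, Fintype.card_fin,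
        Fintype.card_fin, hmax]
    let e : Fin (maxIrr H) ≃ {j : Fin (maxIrr G) // ¬ (j = i₀)} :=
      Fintype.equivOfCardEq hcard
    let f : Fin (maxIrr H) → Fin (maxIrr G) := fun k => (e k).1
    have hfne : ∀ k, f k ≠ i₀ := fun k => (e k).2
    have hfinj : Function.Injective f := fun a b hab => e.injective (Subtype.ext hab)
    have hgf : ∀ k, g (f k) ∈ H := fun k => hsub ⟨f k, hfne k, rfl⟩
    let g' : Fin (maxIrr H) → H := fun k => ⟨g (f k), hgf k⟩
    have himg : ∀ s : Set (Fin (maxIrr H)), ((↑) '' (g' '' s) : Set G) = g '' (f '' s) := by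
      intro s
      rw [Set.image_image, Set.image_image]
    have hfcompl : ∀ k, f '' {k}ᶜ = {i₀}ᶜ ∩ {f k}ᶜ := by
      intro k
      ext x
      simp only [Set.mem_image, Set.mem_compl_iff, Set.mem_singleton_iff, Set.mem_inter_iff]
      constructor
      · rintro ⟨j, hj, rfl⟩
        exact ⟨hfne j, fun hx => hj (hfinj hx)⟩
      · rintro ⟨hx1, hx2⟩
        obtain ⟨j, hj⟩ : ∃ j, f j = x := ⟨e.symm ⟨x, hx1⟩, by simp [f]⟩
        exact ⟨j, fun hjk => hx2 (by rw [← hj, hjk]), hj⟩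
    have hg' : IrredundantGenSeq g' := by
      constructor
      · rw [closure_coe_image_eq_iff]
        have h1 : ((↑) '' Set.range g' : Set G) = g '' (f '' Set.univ) := by
          rw [← Set.image_univ, himg]
        have h2 : f '' Set.univ = {i₀}ᶜ := by
          ext x
          simp only [Set.image_univ, Set.mem_range, Set.mem_compl_iff, Set.mem_singleton_iff]
          constructor
          · rintro ⟨k, rfl⟩; exact hfne k
          · intro hx; exact ⟨e.symm ⟨x, hx⟩, by simp [f]⟩
        rw [h1, h2, ← hHeq]
      · intro k hk
        rw [closure_coe_image_eq_iff, himg, hfcompl] at hk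
        apply hg.2 (f k)
        apply hcoH.2
        refine lt_of_le_of_ne ?_ fun he => ?_
        · rw [← hk]
          exact Subgroup.closure_mono (Set.image_mono Set.inter_subset_right)
        · exact hgi₀ (he ▸ Subgroup.subset_closure ⟨i₀, fun hx => hfne k hx.symm, rfl⟩)
    have hne1 : (⟨h, hmem⟩ : H) ≠ 1 := by
      intro hc
      exact hh (by simpa using congrArg Subtype.val hc)
    obtain ⟨k, hk⟩ := hrep g' hg' ⟨h, hmem⟩ hne1
    rw [closure_coe_image_eq_iff] at hk
    refine ⟨f k, hcoH.2 _ (lt_of_le_of_ne ?_ fun he => ?_)⟩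
    · rw [← hk]
      refine (Subgroup.closure_le _).2 ?_
      rintro x ⟨y, ⟨j, rfl⟩, rfl⟩
      apply Subgroup.subset_closure
      by_cases hjk : j = k
      · subst hjk
        refine ⟨f j, ?_⟩
        rw [Function.update_self, Function.update_self]
      · refine ⟨f j, ?_⟩
        rw [Function.update_of_ne (fun hx => hjk (hfinj hx)),
          Function.update_of_ne hjk]
    · refine hgi₀ (he ▸ Subgroup.subset_closure ⟨i₀, ?_⟩)
      rw [Function.update_of_ne (fun hx => hfne k hx.symm)]
  · -- h lies outside H: replace the i₀-th entry.
    refine ⟨i₀, hcoH.2 _ (lt_of_le_of_ne ?_ fun he => ?_)⟩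
    · rw [hHeq]
      refine Subgroup.closure_mono ?_
      rintro x ⟨j, hj, rfl⟩
      exact ⟨j, Function.update_of_ne hj _ _⟩
    · refine hmem (he ▸ Subgroup.subset_closure ⟨i₀, ?_⟩)
      rw [Function.update_self]
end
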